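/- arXiv:1007.1234 — 7 statements merged into one kernel-verified Lean document; each statement's English description precedes it below -/
import Mathlib

section
/- Let D ∈ ℝ^{n×n} and S ∈ ℝ^{(n-p)×n} with rank S = n-p and ker S ⊆ ker D. Then D̂ = S D S⁺ is the unique matrix satisfying S D = D̂ S, i.e., the unique pseudo-similar matrix to D via S. -/
open Matrix

/-- The Moore–Penrose pseudo-inverse of a full-row-rank matrix: `S⁺ = Sᵀ(SSᵀ)⁻¹`. -/
noncomputable def moorePenrose {k n : ℕ} (S : Matrix (Fin k) (Fin n) ℝ) :
    Matrix (Fin n) (Fin k) ℝ :=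
  Sᵀ * (S * Sᵀ)⁻¹

lemma aux_isUnit_det {k n : ℕ} (S : Matrix (Fin k) (Fin n) ℝ) (hrank : S.rank = k) :
    IsUnit (S * Sᵀ).det := by
  have h1 : (S * Sᵀ).rank = k := by rw [Matrix.rank_self_mul_transpose, hrank]
  -- range of mulVecLin is top
  have htop : LinearMap.range (S * Sᵀ).mulVecLin = ⊤ := by
    apply Submodule.eq_top_of_finrank_eq
    rw [← Matrix.rank]
    simp [h1]
  have hsurj : Function.Surjective (S * Sᵀ).mulVecLin :=
    LinearMap.range_eq_top.mp htop
  have hinj : Function.Injective (S * Sᵀ).mulVecLin :=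
    (LinearMap.injective_iff_surjective).mpr hsurj
  rw [isUnit_iff_ne_zero]
  intro hdet
  obtain ⟨v, hv, hv0⟩ := (Matrix.exists_mulVec_eq_zero_iff).mpr hdet
  exact hv (hinj (show (S * Sᵀ).mulVecLin v = (S * Sᵀ).mulVecLin 0 by
    rw [Matrix.mulVecLin_apply, Matrix.mulVecLin_apply, hv0, Matrix.mulVec_zero]))

/-- If `rank S = n - p` and `ker S ⊆ ker D`, then `D̂ = S D S⁺` is the unique
matrix satisfying `S D = D̂ S`, i.e. the unique pseudo-similar matrix to `D` via `S`. -/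
theorem pseudo_similar_exists_unique {n p : ℕ}
    (D : Matrix (Fin n) (Fin n) ℝ) (S : Matrix (Fin (n - p)) (Fin n) ℝ)
    (hrank : S.rank = n - p)
    (hker : ∀ v : Fin n → ℝ, S.mulVec v = 0 → D.mulVec v = 0) :
    (S * D = (S * D * moorePenrose S) * S) ∧
    ∀ M : Matrix (Fin (n - p)) (Fin (n - p)) ℝ,
      S * D = M * S → M = S * D * moorePenrose S := by
  have hdet := aux_isUnit_det S hrank
  have hSP : S * moorePenrose S = 1 := by
    rw [moorePenrose, ← Matrix.mul_assoc]
    exact Matrix.mul_nonsing_inv _ hdet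
  have hSPS : S * (moorePenrose S * S) = S := by
    rw [← Matrix.mul_assoc, hSP, Matrix.one_mul]
  have hDP : D * (moorePenrose S * S) = D := by
    have hzero : D * (1 - moorePenrose S * S) = 0 := by
      ext i j
      have h1 : S.mulVec ((1 - moorePenrose S * S).mulVec (Pi.single j 1)) = 0 := by
        rw [Matrix.mulVec_mulVec, Matrix.mul_sub, Matrix.mul_one, hSPS, sub_self]
        exact Matrix.zero_mulVec _
      have h2 := hker _ h1
      rw [Matrix.mulVec_mulVec] at h2
      have := congrFun h2 i
      simpa using this
    rw [Matrix.mul_sub, Matrix.mul_one, sub_eq_zero] at hzero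
    exact hzero.symm
  constructor
  · rw [Matrix.mul_assoc, Matrix.mul_assoc, hDP]
  · intro M hM
    have : (S * D) * moorePenrose S = (M * S) * moorePenrose S := by rw [hM]
    rw [Matrix.mul_assoc M, hSP, Matrix.mul_one] at this
    exact this.symm
end

section
/- Let D ∈ ℝ^{n×n} and S ∈ ℝ^{(n-p)×n} with rank S = n-p and ker S ⊆ ker D, and let D̂ = S D S⁺. Then exp(t D̂) = S exp(t D) S⁺ for all t ∈ ℝ. -/
/-!
With `P = S⁺` one has `S P = 1`, so `1 - P S` maps into `ker S ⊆ ker D` and hence `D P S = D`.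
Then `(S D P)^k = S D^k P` for every `k`, and the exponential series of `S (t D) P` is the image
of that of `t D` under the continuous linear map `X ↦ S X P`.
-/

open Matrix

namespace Matrix

theorem isUnit_of_rank_eq_card {m K : Type*} [Fintype m] [DecidableEq m] [Field K]
    {A : Matrix m m K} (h : A.rank = Fintype.card m) : IsUnit A := by
  rw [← mulVec_surjective_iff_isUnit, ← coe_mulVecLin, ← LinearMap.range_eq_top]
  exact Submodule.eq_top_of_finrank_eq (by rw [← rank, h, Module.finrank_fintype_fun_eq_card])

theorem mul_moorePenrose_of_rank_eq {k n : ℕ} (S : Matrix (Fin k) (Fin n) ℝ)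
    (h : S.rank = k) : S * moorePenrose S = 1 := by
  have hunit : IsUnit (S * Sᵀ) := isUnit_of_rank_eq_card (by simpa using h)
  rw [moorePenrose, ← Matrix.mul_assoc]
  exact mul_nonsing_inv _ ((isUnit_iff_isUnit_det _).mp hunit)

theorem mul_mul_eq_self_of_ker_le {l m n R : Type*} [Fintype m] [DecidableEq m] [Fintype n]
    [CommRing R] {S : Matrix m n R} {P : Matrix n m R} (hSP : S * P = 1) {D : Matrix l n R}
    (hker : ∀ v, S *ᵥ v = 0 → D *ᵥ v = 0) : D * P * S = D := by
  refine ext_iff_mulVec.mpr fun v => ?_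
  have hv : S *ᵥ (v - P *ᵥ S *ᵥ v) = 0 := by
    rw [mulVec_sub, mulVec_mulVec, hSP, one_mulVec, sub_self]
  have hDv := hker _ hv
  rw [mulVec_sub, sub_eq_zero] at hDv
  rw [← mulVec_mulVec, ← mulVec_mulVec, ← hDv]

theorem pow_mul_mul_of_mul_eq_one {m n R : Type*} [Fintype m] [DecidableEq m] [Fintype n]
    [DecidableEq n] [Semiring R] {S : Matrix m n R} {P : Matrix n m R} (hSP : S * P = 1)
    {A : Matrix n n R} (hA : A * P * S = A) (k : ℕ) : (S * A * P) ^ k = S * A ^ k * P := by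
  induction k with
  | zero => rw [pow_zero, pow_zero, Matrix.mul_one, hSP]
  | succ k ih =>
    calc (S * A * P) ^ (k + 1) = S * (A * P * S) * A ^ k * P := by
          rw [pow_succ', ih]; simp only [Matrix.mul_assoc]
      _ = S * A ^ (k + 1) * P := by rw [hA, pow_succ', Matrix.mul_assoc S A]

theorem exp_mul_mul_of_mul_eq_one {m n 𝕂 : Type*} [Fintype m] [DecidableEq m] [Fintype n]
    [DecidableEq n] [RCLike 𝕂] {S : Matrix m n 𝕂} {P : Matrix n m 𝕂} (hSP : S * P = 1)
    {A : Matrix n n 𝕂} (hA : A * P * S = A) :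
    NormedSpace.exp (S * A * P) = S * NormedSpace.exp A * P := by
  have hexp : HasSum (fun k => (k.factorial : 𝕂)⁻¹ • A ^ k) (NormedSpace.exp A) := by
    open scoped Norms.Operator in exact NormedSpace.exp_series_hasSum_exp' A
  have hsum := hexp.map ((mulRightLinearMap m 𝕂 P).comp (mulLeftLinearMap n 𝕂 S))
    ((continuous_const.matrix_mul continuous_id).matrix_mul continuous_const)
  rw [NormedSpace.exp_eq_tsum 𝕂]
  simpa [Function.comp_def, pow_mul_mul_of_mul_eq_one hSP hA, Matrix.mul_smul, Matrix.smul_mul]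
    using hsum.tsum_eq

end Matrix

/-- If `rank S = n - p`, `ker S ⊆ ker D` and `D̂ = S D S⁺`, then
`exp(t D̂) = S exp(t D) S⁺` for all real `t`. -/
theorem exp_pseudo_similar {n p : ℕ}
    (D : Matrix (Fin n) (Fin n) ℝ) (S : Matrix (Fin (n - p)) (Fin n) ℝ)
    (hrank : S.rank = n - p)
    (hker : ∀ v : Fin n → ℝ, S.mulVec v = 0 → D.mulVec v = 0) :
    ∀ t : ℝ,
      NormedSpace.exp (t • (S * D * moorePenrose S)) =
        S * NormedSpace.exp (t • D) * moorePenrose S := by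
  intro t
  have hSP := mul_moorePenrose_of_rank_eq S hrank
  have hDPS := mul_mul_eq_self_of_ker_le hSP hker
  rw [← Matrix.smul_mul, ← Matrix.mul_smul]
  exact exp_mul_mul_of_mul_eq_one hSP (by rw [Matrix.smul_mul, Matrix.smul_mul, hDPS])
end

section
/- Let D ∈ ℝ^{n×n} satisfy De = 0 where e = (1,...,1)ᵀ, and let S ∈ ℝ^{(n-1)×n} with ker S = span{e}. Then there exists a unique D̂ ∈ ℝ^{(n-1)×(n-1)} with S D = D̂ S, namely D̂ = S D S⁺; moreover the eigenvalues of D̂ (with multiplicity) are exactly the eigenvalues of D with one copy of the eigenvalue 0 (corresponding to eigenvector e) removed. -/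
open Matrix Polynomial

private lemma charpoly_conj_aux {ι : Type*} [Fintype ι] [DecidableEq ι]
    (A M : Matrix ι ι ℝ) (hA : IsUnit A.det) :
    (A * M * A⁻¹).charpoly = M.charpoly := by
  have h1 : A * A⁻¹ = 1 := Matrix.mul_nonsing_inv A hA
  set f : Matrix ι ι ℝ →+* Matrix ι ι ℝ[X] := (Polynomial.C (R := ℝ)).mapMatrix with hf
  have hcm : ∀ N : Matrix ι ι ℝ, charmatrix N = (X : ℝ[X]) • (1 : Matrix ι ι ℝ[X]) - f N := by
    intro N
    have hscalar : Matrix.scalar ι (X : ℝ[X]) = (X : ℝ[X]) • (1 : Matrix ι ι ℝ[X]) := by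
      rw [Matrix.smul_one_eq_diagonal]; rfl
    rw [← hscalar]; rfl
  have key : charmatrix (A * M * A⁻¹) = f A * charmatrix M * f A⁻¹ := by
    rw [hcm, hcm, _root_.map_mul, _root_.map_mul, mul_sub, sub_mul]
    congr 1
    rw [mul_smul_comm, mul_one, Matrix.smul_mul, ← _root_.map_mul, h1, _root_.map_one]
  have hdetf : (f A).det * (f A⁻¹).det = 1 := by
    rw [← Matrix.det_mul, ← _root_.map_mul, h1, _root_.map_one, Matrix.det_one]
  calc (A * M * A⁻¹).charpoly = (f A * charmatrix M * f A⁻¹).det := by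
        rw [Matrix.charpoly, key]
    _ = (f A).det * (f A⁻¹).det * (charmatrix M).det := by
        rw [Matrix.det_mul, Matrix.det_mul]; ring
    _ = M.charpoly := by rw [hdetf, one_mul, Matrix.charpoly]

/-- If `De = 0` (`e` the all-ones vector) and `ker S = span{e}` for
`S ∈ ℝ^{(n-1)×n}`, then there is a unique `D̂` with `S D = D̂ S`, namely
`D̂ = S D S⁺`; moreover the characteristic polynomial of `D` is `X` times that of
`D̂`, i.e. the eigenvalues of `D̂` with multiplicity are exactly those of `D`
with one copy of the zero eigenvalue (eigenvector `e`) removed. -/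
theorem reduced_matrix_of_consensus {n : ℕ} (hn : 1 ≤ n)
    (D : Matrix (Fin n) (Fin n) ℝ) (S : Matrix (Fin (n - 1)) (Fin n) ℝ)
    (hD : D.mulVec (fun _ => 1) = 0)
    (hkerS : ∀ v : Fin n → ℝ, S.mulVec v = 0 ↔ ∃ c : ℝ, v = fun _ => c) :
    (∃! Dhat : Matrix (Fin (n - 1)) (Fin (n - 1)) ℝ, S * D = Dhat * S) ∧
    (S * D = (S * D * moorePenrose S) * S) ∧
    D.charpoly = X * (S * D * moorePenrose S).charpoly := by
  have hm : (n - 1) + 1 = n := Nat.succ_pred_eq_of_pos hn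
  -- the all-ones vector is nonzero
  have hone_ne : (fun _ => (1:ℝ) : Fin n → ℝ) ≠ 0 := by
    intro h
    have := congrFun h ⟨0, hn⟩
    simp at this
  -- S.mulVec is surjective
  have hSsurj : Function.Surjective S.mulVec := by
    have hker : LinearMap.ker S.mulVecLin
        = Submodule.span ℝ {(fun _ => (1:ℝ) : Fin n → ℝ)} := by
      ext v
      rw [LinearMap.mem_ker, Matrix.mulVecLin_apply, hkerS, Submodule.mem_span_singleton]
      constructor
      · rintro ⟨c, rfl⟩; exact ⟨c, by funext i; simp⟩
      · rintro ⟨a, rfl⟩; exact ⟨a, by funext i; simp⟩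
    have hkerdim : Module.finrank ℝ (LinearMap.ker S.mulVecLin) = 1 := by
      rw [hker]
      exact finrank_span_singleton hone_ne
    have hrn := LinearMap.finrank_range_add_finrank_ker S.mulVecLin
    rw [hkerdim, Module.finrank_fin_fun] at hrn
    have hrange : LinearMap.range S.mulVecLin = ⊤ := by
      apply Submodule.eq_top_of_finrank_eq
      rw [Module.finrank_fin_fun]
      omega
    intro w
    obtain ⟨v, hv⟩ := LinearMap.range_eq_top.mp hrange w
    exact ⟨v, hv⟩
  -- the left kernel of S is trivial
  have hleft : ∀ x : Fin (n - 1) → ℝ, x ᵥ* S = 0 → x = 0 := by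
    intro x hx
    rw [← dotProduct_self_eq_zero (v := x)]
    obtain ⟨v, hv⟩ := hSsurj x
    calc x ⬝ᵥ x = x ⬝ᵥ S *ᵥ v := by rw [hv]
      _ = x ᵥ* S ⬝ᵥ v := Matrix.dotProduct_mulVec x S v
      _ = 0 := by rw [hx]; simp
  -- S * Sᵀ is invertible
  have hdet : IsUnit (S * Sᵀ).det := by
    rw [← Matrix.isUnit_iff_isUnit_det, ← Matrix.mulVec_injective_iff_isUnit]
    have hker0 : ∀ z, (S * Sᵀ) *ᵥ z = 0 → z = 0 := by
      intro z hz
      apply hleft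
      rw [← dotProduct_self_eq_zero (v := z ᵥ* S)]
      calc z ᵥ* S ⬝ᵥ z ᵥ* S = z ᵥ* S ⬝ᵥ Sᵀ *ᵥ z := by rw [Matrix.mulVec_transpose]
        _ = z ⬝ᵥ S *ᵥ (Sᵀ *ᵥ z) := (Matrix.dotProduct_mulVec z S _).symm
        _ = z ⬝ᵥ (S * Sᵀ) *ᵥ z := by rw [Matrix.mulVec_mulVec]
        _ = 0 := by rw [hz]; simp
    intro x y hxy
    have := hker0 (x - y) (by rw [Matrix.mulVec_sub, hxy, sub_self])
    exact sub_eq_zero.mp this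
  have hSSp : S * moorePenrose S = 1 := by
    rw [moorePenrose, ← Matrix.mul_assoc]
    exact Matrix.mul_nonsing_inv _ hdet
  -- key cancellation : D * (S⁺ S) = D
  have hconst : ∀ c : ℝ, D *ᵥ (fun _ => c) = 0 := by
    intro c
    have h : (fun _ => c : Fin n → ℝ) = c • (fun _ => (1:ℝ)) := by funext i; simp
    rw [h, Matrix.mulVec_smul, hD, smul_zero]
  have hvec : ∀ v, (D * (moorePenrose S * S)) *ᵥ v = D *ᵥ v := by
    intro v
    have hSv : S *ᵥ ((moorePenrose S * S) *ᵥ v - v) = 0 := by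
      rw [Matrix.mulVec_sub, Matrix.mulVec_mulVec, ← Matrix.mul_assoc, hSSp,
        Matrix.one_mul, sub_self]
    obtain ⟨c, hc⟩ := (hkerS _).mp hSv
    have h2 : (moorePenrose S * S) *ᵥ v = v + (fun _ => c) := by
      rw [← hc]; abel
    rw [← Matrix.mulVec_mulVec, h2, Matrix.mulVec_add, hconst, add_zero]
  have key : D * (moorePenrose S * S) = D := by
    ext i j
    have h := congrFun (hvec (Pi.single j 1)) i
    simpa [Matrix.mulVec_single] using h
  have hEx : S * D = (S * D * moorePenrose S) * S := by
    calc S * D = S * (D * (moorePenrose S * S)) := by rw [key]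
      _ = (S * D * moorePenrose S) * S := by
          rw [← Matrix.mul_assoc, ← Matrix.mul_assoc]
  refine ⟨⟨S * D * moorePenrose S, hEx, ?_⟩, hEx, ?_⟩
  · intro Dhat h
    calc Dhat = Dhat * (S * moorePenrose S) := by rw [hSSp, Matrix.mul_one]
      _ = (Dhat * S) * moorePenrose S := by rw [Matrix.mul_assoc]
      _ = S * D * moorePenrose S := by rw [← h]
  -- charpoly part
  · set P := moorePenrose S with hP
    set Dhat := S * D * P with hDhat
    set σ : Fin n ≃ (Fin (n - 1) ⊕ Fin 1) := ((finSumFinEquiv (m := n - 1) (n := 1)).trans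
      (finCongr hm)).symm with hσ
    set O : Matrix (Fin 1) (Fin n) ℝ := Matrix.of (fun _ _ => (1:ℝ)) with hO
    set B : Matrix (Fin (n - 1) ⊕ Fin 1) (Fin n) ℝ := Matrix.fromRows S O with hB
    set A : Matrix (Fin (n - 1) ⊕ Fin 1) (Fin (n - 1) ⊕ Fin 1) ℝ :=
      B.submatrix id σ.symm with hA
    have hAdet : IsUnit A.det := by
      rw [← Matrix.isUnit_iff_isUnit_det, ← Matrix.mulVec_injective_iff_isUnit]
      have hker0 : ∀ z, A *ᵥ z = 0 → z = 0 := by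
        intro z hz
        rw [hA, Matrix.submatrix_mulVec_equiv] at hz
        simp only [Equiv.symm_symm, Function.comp_id] at hz
        have hz' : B *ᵥ (z ∘ σ) = 0 := by
          funext i; exact congrFun hz i
        rw [hB, Matrix.fromRows_mulVec] at hz'
        have hS0 : S *ᵥ (z ∘ σ) = 0 := by
          funext i; exact congrFun hz' (Sum.inl i)
        have hO0 : O *ᵥ (z ∘ σ) = 0 := by
          funext i; exact congrFun hz' (Sum.inr i)
        obtain ⟨c, hc⟩ := (hkerS _).mp hS0
        have hsum := congrFun hO0 0
        rw [hc] at hsum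
        have hnc : (n : ℝ) * c = 0 := by
          simpa [Matrix.mulVec, dotProduct, hO, Finset.sum_const] using hsum
        have hc0 : c = 0 := by
          have hn0 : (n : ℝ) ≠ 0 := by
            exact_mod_cast Nat.one_le_iff_ne_zero.mp hn
          exact (mul_eq_zero.mp hnc).resolve_left hn0
        have hzσ : z ∘ σ = 0 := by rw [hc, hc0]; funext i; simp
        funext j
        have h := congrFun hzσ (σ.symm j)
        simpa using h
      intro x y hxy
      have h := hker0 (x - y) (by rw [Matrix.mulVec_sub, hxy, sub_self])
      exact sub_eq_zero.mp h
    set F : Matrix (Fin (n - 1) ⊕ Fin 1) (Fin (n - 1) ⊕ Fin 1) ℝ :=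
      Matrix.fromBlocks Dhat 0 (O * D * P) 0 with hF
    have hFB : B * D = F * B := by
      rw [hB, hF, Matrix.fromRows_mul, Matrix.fromBlocks_mul_fromRows,
        Matrix.zero_mul, add_zero, Matrix.zero_mul, add_zero, ← hEx]
      have hOD : O * D = (O * D * P) * S := by
        calc O * D = O * (D * (P * S)) := by rw [key]
          _ = (O * D * P) * S := by rw [← Matrix.mul_assoc, ← Matrix.mul_assoc]
      rw [← hOD]
    have hAD : A * (Matrix.reindex σ σ D) = F * A := by
      have h2 : A * (Matrix.reindex σ σ D) = (B * D).submatrix id ⇑σ.symm := by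
        rw [hA, Matrix.reindex_apply]
        exact Matrix.submatrix_mul_equiv B D id σ.symm ⇑σ.symm
      have h3 : F * A = (F * B).submatrix id ⇑σ.symm := by
        conv_lhs => rw [hA, ← Matrix.submatrix_id_id F]
        have h := Matrix.submatrix_mul_equiv F B id (Equiv.refl (Fin (n - 1) ⊕ Fin 1)) ⇑σ.symm
        simpa using h
      rw [h2, h3, hFB]
    have hD' : Matrix.reindex σ σ D = A⁻¹ * F * A := by
      have hinv : A⁻¹ * A = 1 := Matrix.nonsing_inv_mul A hAdet
      calc Matrix.reindex σ σ D = (A⁻¹ * A) * Matrix.reindex σ σ D := by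
            rw [hinv, Matrix.one_mul]
        _ = A⁻¹ * (A * Matrix.reindex σ σ D) := by rw [Matrix.mul_assoc]
        _ = A⁻¹ * (F * A) := by rw [hAD]
        _ = A⁻¹ * F * A := by rw [Matrix.mul_assoc]
    have hzero : (0 : Matrix (Fin 1) (Fin 1) ℝ).charpoly = X := by
      rw [Matrix.charpoly, Matrix.det_fin_one]
      simp
    calc D.charpoly = (Matrix.reindex σ σ D).charpoly := (Matrix.charpoly_reindex σ D).symm
      _ = (A⁻¹ * F * A⁻¹⁻¹).charpoly := by
          rw [hD', Matrix.nonsing_inv_nonsing_inv A hAdet]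
      _ = F.charpoly := charpoly_conj_aux A⁻¹ F (Matrix.isUnit_nonsing_inv_det A hAdet)
      _ = Dhat.charpoly * (0 : Matrix (Fin 1) (Fin 1) ℝ).charpoly := by
          rw [hF]; exact Matrix.charpoly_fromBlocks_zero₁₂ _ _ _
      _ = X * Dhat.charpoly := by rw [hzero, mul_comm]
end

section
/- Suppose D(t) ∈ ℝ^{n×n} is measurable locally bounded with D(t)e = 0 for all t ≥ 0, and its reduced matrix D̂(t) = S̃ D(t) S̃⁺ satisfies yᵀ D̂(t) y ≤ -α yᵀy for all y ∈ ℝ^{n-1}, t ≥ 0, for some α > 0. Then every solution of ẋ = D(t)x converges to the consensus subspace with exponential rate at least α: |S̃ x(t)| ≤ |S̃ x(0)| e^{-α t}. -/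
/-!
Write `y = S̃x`. Since `S̃S̃⁺ = 1`, the vector `x - S̃⁺y` lies in `ker S̃ = span{e}`, which `D(t)`
annihilates, so `D(t)x = D(t)S̃⁺y` and `y` solves the reduced system `ẏ = D̂(t)y`. Dissipativity
then gives `d/dt |y|² = 2 yᵀD̂y ≤ -2α|y|²`, and Grönwall's inequality yields
`|y(t)|² ≤ |y(0)|² e^{-2αt}`.
-/

open Matrix

/-- Euclidean norm of a vector given as a function. -/
noncomputable def euclEnorm {k : ℕ} (v : Fin k → ℝ) : ℝ := Real.sqrt (v ⬝ᵥ v)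

theorem Matrix.isUnit_of_rank_eq_card_s8 {m K : Type*} [Fintype m] [DecidableEq m] [Field K]
    {A : Matrix m m K} (h : A.rank = Fintype.card m) : IsUnit A := by
  rw [← mulVec_surjective_iff_isUnit]
  change Function.Surjective A.mulVecLin
  rw [← LinearMap.range_eq_top]
  apply Submodule.eq_top_of_finrank_eq
  rwa [Module.finrank_fintype_fun_eq_card]

theorem mul_moorePenrose {k n : ℕ} {S : Matrix (Fin k) (Fin n) ℝ} (h : S.rank = k) :
    S * moorePenrose S = 1 := by
  have hu : IsUnit (S * Sᵀ) :=
    isUnit_of_rank_eq_card_s8 (by rw [rank_self_mul_transpose, h, Fintype.card_fin])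
  rw [moorePenrose, ← Matrix.mul_assoc, mul_nonsing_inv _ ((isUnit_iff_isUnit_det _).mp hu)]

theorem Matrix.mulVec_eq_mul_mulVec_of_ker_le {l m n R : Type*} [Fintype m] [Fintype n]
    [DecidableEq m] [CommRing R] {S : Matrix m n R} {P : Matrix n m R} {D : Matrix l n R}
    (hSP : S * P = 1) (hker : ∀ v, S *ᵥ v = 0 → D *ᵥ v = 0) (x : n → R) :
    D *ᵥ x = (D * P) *ᵥ (S *ᵥ x) := by
  have hSx : S *ᵥ (x - P *ᵥ (S *ᵥ x)) = 0 := by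
    rw [mulVec_sub, mulVec_mulVec, hSP, one_mulVec, sub_self]
  rw [← mulVec_mulVec, ← sub_eq_zero, ← mulVec_sub]
  exact hker _ hSx

theorem HasDerivAt.matrix_mulVec {m n : Type*} [Fintype m] [Fintype n] (A : Matrix m n ℝ)
    {x : ℝ → n → ℝ} {x' : n → ℝ} {t : ℝ} (hx : HasDerivAt x x' t) :
    HasDerivAt (fun u => A *ᵥ x u) (A *ᵥ x') t :=
  A.mulVecLin.toContinuousLinearMap.hasFDerivAt.comp_hasDerivAt t hx

theorem HasDerivAt.dotProduct {ι : Type*} [Fintype ι] {f g : ℝ → ι → ℝ} {f' g' : ι → ℝ} {t : ℝ}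
    (hf : HasDerivAt f f' t) (hg : HasDerivAt g g' t) :
    HasDerivAt (fun u => f u ⬝ᵥ g u) (f' ⬝ᵥ g t + f t ⬝ᵥ g') t := by
  have := HasDerivAt.fun_sum (u := Finset.univ) fun i _ =>
    (hasDerivAt_pi.mp hf i).mul (hasDerivAt_pi.mp hg i)
  rw [_root_.dotProduct, _root_.dotProduct, ← Finset.sum_add_distrib]
  exact this

theorem dotProduct_self_le_mul_exp_of_dissipative {ι : Type*} [Fintype ι] {y y' : ℝ → ι → ℝ}
    {α : ℝ} (hy : ∀ s ≥ 0, HasDerivAt y (y' s) s)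
    (hdiss : ∀ s ≥ 0, y s ⬝ᵥ y' s ≤ -α * (y s ⬝ᵥ y s)) {t : ℝ} (ht : 0 ≤ t) :
    y t ⬝ᵥ y t ≤ (y 0 ⬝ᵥ y 0) * Real.exp (-(2 * α) * t) := by
  have hg : ∀ s ≥ 0, HasDerivAt (fun u => y u ⬝ᵥ y u) (2 * (y s ⬝ᵥ y' s)) s := fun s hs => by
    convert (hy s hs).dotProduct (hy s hs) using 1
    rw [dotProduct_comm (y' s)]; ring
  have := le_gronwallBound_of_liminf_deriv_right_le (f := fun u => y u ⬝ᵥ y u)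
    (K := -(2 * α)) (ε := 0) (a := 0) (b := t)
    (fun s hs => (hg s hs.1).continuousAt.continuousWithinAt)
    (fun s hs _ hr => (hg s hs.1).hasDerivWithinAt.liminf_right_slope_le hr) le_rfl
    (fun s hs => by linarith [hdiss s hs.1]) t ⟨ht, le_rfl⟩
  simpa only [gronwallBound_ε0, sub_zero] using this

theorem euclEnorm_le_mul_exp_of_dissipative {k : ℕ} {y y' : ℝ → Fin k → ℝ}
    {α : ℝ} (hy : ∀ s ≥ 0, HasDerivAt y (y' s) s)
    (hdiss : ∀ s ≥ 0, y s ⬝ᵥ y' s ≤ -α * (y s ⬝ᵥ y s)) {t : ℝ} (ht : 0 ≤ t) :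
    euclEnorm (y t) ≤ euclEnorm (y 0) * Real.exp (-α * t) := by
  have hexp : Real.exp (-(2 * α) * t) = Real.exp (-α * t) ^ 2 := by
    rw [← Real.exp_nat_mul]; ring_nf
  have hy0 : 0 ≤ y 0 ⬝ᵥ y 0 := Finset.sum_nonneg fun i _ => mul_self_nonneg (y 0 i)
  calc euclEnorm (y t)
      ≤ Real.sqrt ((y 0 ⬝ᵥ y 0) * Real.exp (-α * t) ^ 2) := by
        rw [← hexp]
        exact Real.sqrt_le_sqrt (dotProduct_self_le_mul_exp_of_dissipative hy hdiss ht)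
    _ = euclEnorm (y 0) * Real.exp (-α * t) := by
        rw [Real.sqrt_mul hy0, Real.sqrt_sq (Real.exp_pos _).le, euclEnorm]

theorem uniformly_dissipative_convergence_general {n : ℕ}
    (D : ℝ → Matrix (Fin n) (Fin n) ℝ)
    (St : Matrix (Fin (n - 1)) (Fin n) ℝ)
    (hDe : ∀ t ≥ (0 : ℝ), (D t).mulVec (fun _ => 1) = 0)
    (hrank : St.rank = n - 1)
    (hkerSt : ∀ v : Fin n → ℝ, St.mulVec v = 0 ↔ ∃ c : ℝ, v = fun _ => c)
    (α : ℝ)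
    (hdiss : ∀ t ≥ (0 : ℝ), ∀ y : Fin (n - 1) → ℝ,
      y ⬝ᵥ (St * D t * moorePenrose St).mulVec y ≤ -α * (y ⬝ᵥ y)) :
    ∀ x : ℝ → (Fin n → ℝ), (∀ t, HasDerivAt x ((D t).mulVec (x t)) t) →
      ∀ t ≥ (0 : ℝ),
        euclEnorm (St.mulVec (x t)) ≤ euclEnorm (St.mulVec (x 0)) * Real.exp (-α * t) := by
  intro x hx t ht
  have hker : ∀ s ≥ (0 : ℝ), ∀ v, St *ᵥ v = 0 → D s *ᵥ v = 0 := by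
    intro s hs v hv
    obtain ⟨c, rfl⟩ := (hkerSt v).mp hv
    rw [show (fun _ => c) = c • fun _ : Fin n => (1 : ℝ) by ext; simp, mulVec_smul, hDe s hs,
      smul_zero]
  have hreduced : ∀ s ≥ (0 : ℝ), HasDerivAt (fun u => St *ᵥ x u)
      ((St * D s * moorePenrose St) *ᵥ (St *ᵥ x s)) s := by
    intro s hs
    rw [Matrix.mul_assoc, ← mulVec_mulVec,
      ← mulVec_eq_mul_mulVec_of_ker_le (mul_moorePenrose hrank) (hker s hs)]
    exact (hx s).matrix_mulVec St
  exact euclEnorm_le_mul_exp_of_dissipative hreduced (fun s hs => hdiss s hs _) ht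

/-- If the measurable, locally bounded coupling matrix `D(t)` satisfies
`D(t)e = 0` and the reduced matrix `D̂(t) = S̃ D(t) S̃⁺` is uniformly dissipative
with parameter `α > 0`, then every solution of `ẋ = D(t)x` converges to the
consensus subspace with exponential rate at least `α`:
`|S̃x(t)| ≤ |S̃x(0)| e^{-αt}`. -/
theorem uniformly_dissipative_convergence {n : ℕ} (hn : 1 ≤ n)
    (D : ℝ → Matrix (Fin n) (Fin n) ℝ)
    (St : Matrix (Fin (n - 1)) (Fin n) ℝ)
    (hmeas : ∀ i j, Measurable fun t => D t i j)
    (hloc : ∀ T > (0 : ℝ), ∃ M : ℝ, ∀ t ∈ Set.Icc 0 T, ∀ i j, |D t i j| ≤ M)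
    (hDe : ∀ t ≥ (0 : ℝ), (D t).mulVec (fun _ => 1) = 0)
    (hrank : St.rank = n - 1)
    (hkerSt : ∀ v : Fin n → ℝ, St.mulVec v = 0 ↔ ∃ c : ℝ, v = fun _ => c)
    (α : ℝ) (hαpos : 0 < α)
    (hdiss : ∀ t ≥ (0 : ℝ), ∀ y : Fin (n - 1) → ℝ,
      y ⬝ᵥ (St * D t * moorePenrose St).mulVec y ≤ -α * (y ⬝ᵥ y)) :
    ∀ x : ℝ → (Fin n → ℝ), (∀ t, HasDerivAt x ((D t).mulVec (x t)) t) →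
      ∀ t ≥ (0 : ℝ),
        euclEnorm (St.mulVec (x t)) ≤ euclEnorm (St.mulVec (x 0)) * Real.exp (-α * t) :=
  uniformly_dissipative_convergence_general D St hDe hrank hkerSt α hdiss
end

section
/- Let G be a connected simple graph with Laplacian L = HᵀH, spanning tree G̃ with Laplacian L̃ = H̃ᵀH̃, and cycle incidence matrix Q. Then the algebraic connectivity satisfies α(G) ≥ α(G̃) · λ_min(I_{n-1} + QᵀQ), where α denotes the second-smallest Laplacian eigenvalue and λ_min the smallest eigenvalue. -/
open Matrix

/-- A row of a coboundary (incidence) matrix of an oriented graph: exactly one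
`+1` (the positive end), one `-1` (the negative end), and zeros elsewhere. -/
def IsEdgeRow {n : ℕ} (r : Fin n → ℝ) : Prop :=
  ∃ a b : Fin n, a ≠ b ∧ r a = 1 ∧ r b = -1 ∧ ∀ j, j ≠ a → j ≠ b → r j = 0

/-- Algebraic connectivity of a graph with Laplacian `L`: the second smallest
Laplacian eigenvalue, characterized variationally as the infimum of the Rayleigh
quotient over unit vectors orthogonal to the all-ones vector. -/
noncomputable def algConn {m : ℕ} (L : Matrix (Fin m) (Fin m) ℝ) : ℝ :=
  sInf {r : ℝ | ∃ x : Fin m → ℝ, x ⬝ᵥ x = 1 ∧ x ⬝ᵥ (fun _ => 1) = 0 ∧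
    r = x ⬝ᵥ L.mulVec x}

/-- Smallest eigenvalue of a symmetric matrix, variationally. -/
noncomputable def lamMin {m : ℕ} (A : Matrix (Fin m) (Fin m) ℝ) : ℝ :=
  sInf {r : ℝ | ∃ x : Fin m → ℝ, x ⬝ᵥ x = 1 ∧ r = x ⬝ᵥ A.mulVec x}

lemma dp_self_nonneg {m : ℕ} (v : Fin m → ℝ) : 0 ≤ v ⬝ᵥ v := by
  simp only [dotProduct]
  exact Finset.sum_nonneg fun i _ => mul_self_nonneg _

lemma quad_form {a b : Type*} [Fintype a] [Fintype b]
    (A : Matrix a b ℝ) (x : b → ℝ) :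
    x ⬝ᵥ (Aᵀ * A).mulVec x = A.mulVec x ⬝ᵥ A.mulVec x := by
  rw [← mulVec_mulVec, dotProduct_mulVec, vecMul_transpose]

lemma quadIQ {a b : ℕ} (Q : Matrix (Fin a) (Fin b) ℝ) (z : Fin b → ℝ) :
    z ⬝ᵥ ((1 + Qᵀ * Q).mulVec z) = z ⬝ᵥ z + Q.mulVec z ⬝ᵥ Q.mulVec z := by
  rw [add_mulVec, dotProduct_add, one_mulVec, quad_form]

/-- For a connected simple graph `G` with Laplacian `L = HᵀH`, spanning tree `G̃`
with Laplacian `L̃ = H̃ᵀH̃`, and cycle incidence matrix `Q` (so `H = (H̃; -QH̃)`),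
the algebraic connectivity satisfies `α(G) ≥ α(G̃) · λ_min(I_{n-1} + QᵀQ)`. -/
theorem algConn_lower_bound {n c : ℕ}
    (Ht : Matrix (Fin (n - 1)) (Fin n) ℝ)
    (B : Matrix (Fin c) (Fin n) ℝ)
    (Q : Matrix (Fin c) (Fin (n - 1)) ℝ)
    (hHtRows : ∀ i, IsEdgeRow (Ht i))
    (hBRows : ∀ k, IsEdgeRow (B k))
    (hrank : Ht.rank = n - 1)
    (hQ : B = (-Q) * Ht) :
    letI H : Matrix (Fin (n - 1) ⊕ Fin c) (Fin n) ℝ := Matrix.fromRows Ht B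
    algConn (Hᵀ * H) ≥
      algConn (Htᵀ * Ht) * lamMin ((1 : Matrix (Fin (n-1)) (Fin (n-1)) ℝ) + Qᵀ * Q) := by
  set H : Matrix (Fin (n - 1) ⊕ Fin c) (Fin n) ℝ := Matrix.fromRows Ht B with hH
  set lQ := lamMin ((1 : Matrix (Fin (n-1)) (Fin (n-1)) ℝ) + Qᵀ * Q) with hlQ
  have hlQbdd : BddBelow {r : ℝ | ∃ z : Fin (n-1) → ℝ, z ⬝ᵥ z = 1 ∧
      r = z ⬝ᵥ ((1 + Qᵀ * Q).mulVec z)} := by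
    refine ⟨0, ?_⟩
    rintro r ⟨z, hz, rfl⟩
    rw [quadIQ]
    exact add_nonneg (dp_self_nonneg z) (dp_self_nonneg _)
  have hlQ0 : 0 ≤ lQ := by
    apply Real.sInf_nonneg
    rintro r ⟨z, hz, rfl⟩
    rw [quadIQ]
    exact add_nonneg (dp_self_nonneg z) (dp_self_nonneg _)
  -- key pointwise bound
  have hkey : ∀ y : Fin (n-1) → ℝ,
      lQ * (y ⬝ᵥ y) ≤ y ⬝ᵥ y + Q.mulVec y ⬝ᵥ Q.mulVec y := by
    intro y
    by_cases hy : y = 0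
    · subst hy; simp
    · have hyy : 0 < y ⬝ᵥ y :=
        lt_of_le_of_ne (dp_self_nonneg y) (fun h => hy (dotProduct_self_eq_zero.mp h.symm))
      set cy := Real.sqrt (y ⬝ᵥ y) with hcdef
      have hc : cy ^ 2 = y ⬝ᵥ y := Real.sq_sqrt hyy.le
      have hcpos : 0 < cy := Real.sqrt_pos.mpr hyy
      set z : Fin (n-1) → ℝ := cy⁻¹ • y with hzdef
      have hz1 : z ⬝ᵥ z = 1 := by
        rw [hzdef, smul_dotProduct, dotProduct_smul, smul_eq_mul, smul_eq_mul, ← hc]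
        field_simp
      have hmem : z ⬝ᵥ ((1 + Qᵀ * Q).mulVec z) ∈ {r : ℝ | ∃ z : Fin (n-1) → ℝ, z ⬝ᵥ z = 1 ∧
          r = z ⬝ᵥ ((1 + Qᵀ * Q).mulVec z)} := ⟨z, hz1, rfl⟩
      have hle : lQ ≤ z ⬝ᵥ ((1 + Qᵀ * Q).mulVec z) := csInf_le hlQbdd hmem
      have hzval : z ⬝ᵥ ((1 + Qᵀ * Q).mulVec z) =
          1 + cy⁻¹ * (cy⁻¹ * (Q.mulVec y ⬝ᵥ Q.mulVec y)) := by
        rw [quadIQ, hz1, hzdef, mulVec_smul, smul_dotProduct, dotProduct_smul,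
          smul_eq_mul, smul_eq_mul]
      rw [hzval] at hle
      have hcny : cy ≠ 0 := hcpos.ne'
      have h2 := mul_le_mul_of_nonneg_right hle hyy.le
      have h3 : (1 + cy⁻¹ * (cy⁻¹ * (Q.mulVec y ⬝ᵥ Q.mulVec y))) * (y ⬝ᵥ y) =
          y ⬝ᵥ y + Q.mulVec y ⬝ᵥ Q.mulVec y := by
        rw [← hc]; field_simp
      linarith
  -- case split on existence of admissible vector
  by_cases hP : ∃ x : Fin n → ℝ, x ⬝ᵥ x = 1 ∧ x ⬝ᵥ (fun _ => 1) = 0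
  · obtain ⟨x₀, hx₀1, hx₀2⟩ := hP
    rw [ge_iff_le]
    unfold algConn
    apply le_csInf
    · exact ⟨x₀ ⬝ᵥ (Hᵀ * H).mulVec x₀, x₀, hx₀1, hx₀2, rfl⟩
    rintro r ⟨x, hx1, hxo, rfl⟩
    have hBx : B.mulVec x = -(Q.mulVec (Ht.mulVec x)) := by
      rw [hQ, ← mulVec_mulVec, neg_mulVec]
    have hr : x ⬝ᵥ (Hᵀ * H).mulVec x =
        Ht.mulVec x ⬝ᵥ Ht.mulVec x +
        Q.mulVec (Ht.mulVec x) ⬝ᵥ Q.mulVec (Ht.mulVec x) := by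
      rw [quad_form, show H.mulVec x = Sum.elim (Ht.mulVec x) (B.mulVec x) from
        fromRows_mulVec Ht B x, sumElim_dotProduct_sumElim, hBx, neg_dotProduct,
        dotProduct_neg, neg_neg]
    rw [hr]
    have hα : algConn (Htᵀ * Ht) ≤ Ht.mulVec x ⬝ᵥ Ht.mulVec x := by
      have hbdd : BddBelow {r : ℝ | ∃ x : Fin n → ℝ, x ⬝ᵥ x = 1 ∧
          x ⬝ᵥ (fun _ => 1) = 0 ∧ r = x ⬝ᵥ (Htᵀ * Ht).mulVec x} := by
        refine ⟨0, ?_⟩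
        rintro r ⟨x, _, _, rfl⟩
        rw [quad_form]
        exact dp_self_nonneg _
      have := csInf_le hbdd ⟨x, hx1, hxo, rfl⟩
      rwa [quad_form] at this
    calc algConn (Htᵀ * Ht) * lQ ≤ (Ht.mulVec x ⬝ᵥ Ht.mulVec x) * lQ :=
          mul_le_mul_of_nonneg_right hα hlQ0
      _ = lQ * (Ht.mulVec x ⬝ᵥ Ht.mulVec x) := mul_comm _ _
      _ ≤ _ := hkey (Ht.mulVec x)
  · push_neg at hP
    have h1 : algConn (Hᵀ * H) = 0 := by
      unfold algConn
      convert Real.sInf_empty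
      rw [Set.eq_empty_iff_forall_notMem]
      rintro r ⟨x, hx1, hxo, _⟩
      exact hP x hx1 hxo
    have h2 : algConn (Htᵀ * Ht) = 0 := by
      unfold algConn
      convert Real.sInf_empty
      rw [Set.eq_empty_iff_forall_notMem]
      rintro r ⟨x, hx1, hxo, _⟩
      exact hP x hx1 hxo
    rw [h1, h2, zero_mul]
end

section
/- Let G be a connected graph on n vertices of corank c > 0 with spanning tree G̃, fundamental cycles O₁,...,O_c, and cycle incidence matrix Q. Set κ(G,G̃) = Tr((I_{n-1}+QᵀQ)⁻¹) and μ = (n-1)⁻¹ Σ_{k=1}^c (|O_k|-1). Then 1/(1+μ) ≤ κ(G,G̃)/(n-1) ≤ 1. -/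
/-!
Every column of `Q` has entries in `[-1, 1]`: removing the tree edge `j` splits the tree into
two components, and the indicator `x` of one of them satisfies `Ht x = e_j`, so column `j` of
`-Q` is `B x`, whose entries are differences of two values in `{0, 1}`. Hence
`tr (QᵀQ) ≤ Σ_k (|O_k| - 1) = (n - 1) μ`.

The eigenvalues `λ_i` of `A = I + QᵀQ` are all `≥ 1`, so `κ = Σ λ_i⁻¹ ≤ n - 1`, and by
Cauchy–Schwarz `(n - 1)² ≤ (Σ λ_i) (Σ λ_i⁻¹) = tr A · κ ≤ (n - 1) (1 + μ) κ`.
-/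

open Matrix

open Finset
open scoped MatrixOrder ComplexOrder

lemma Finset.sum_sq_le_card_filter_ne_zero {ι : Type*} [Fintype ι] (f : ι → ℝ)
    (hf : ∀ i, |f i| ≤ 1) : ∑ i, f i ^ 2 ≤ #{i | f i ≠ 0} := by
  calc ∑ i, f i ^ 2 = ∑ i with f i ≠ 0, f i ^ 2 :=
        (sum_filter_of_ne fun i _ h ↦ by simpa using h).symm
    _ ≤ ∑ i with f i ≠ 0, 1 :=
        sum_le_sum fun i _ ↦ (sq_le_one_iff_abs_le_one _).mpr (hf i)
    _ = _ := by simp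

namespace Matrix

lemma posDef_of_one_le {n 𝕜 : Type*} [DecidableEq n] [RCLike 𝕜] {A : Matrix n n 𝕜}
    (h : 1 ≤ A) : A.PosDef := by
  simpa using PosDef.one.add_posSemidef (le_iff.mp h)

lemma linearIndependent_row_of_rank_eq_card {R m k : Type*} [Field R] [Fintype m] [Fintype k]
    {M : Matrix m k R} (h : M.rank = Fintype.card m) : LinearIndependent R M.row :=
  linearIndependent_iff_card_eq_finrank_span.mpr
    (by rw [Set.finrank, ← rank_eq_finrank_span_row, h])

lemma trace_transpose_mul_self {m k : Type*} [Fintype m] [Fintype k] (Q : Matrix m k ℝ) :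
    (Qᵀ * Q).trace = ∑ i, ∑ j, Q i j ^ 2 := by
  rw [trace, Finset.sum_comm]
  simp [mul_apply, sq]

variable {n 𝕜 : Type*} [Fintype n] [DecidableEq n] [RCLike 𝕜]

lemma IsHermitian.trace_cfc {A : Matrix n n 𝕜} (hA : A.IsHermitian) (f : ℝ → ℝ) :
    (cfc f A).trace = ∑ i, (f (hA.eigenvalues i) : 𝕜) := by
  rw [hA.cfc_eq, IsHermitian.cfc, Unitary.conjStarAlgAut_apply, trace_mul_cycle,
    Unitary.coe_star_mul_self, one_mul, trace_diagonal]
  rfl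

lemma PosDef.trace_inv {A : Matrix n n 𝕜} (hA : A.PosDef) :
    A⁻¹.trace = ∑ i, ((hA.1.eigenvalues i)⁻¹ : 𝕜) := by
  rw [nonsing_inv_eq_ringInverse,
    ← cfc_ringInverse_id (R := ℝ) (p := IsSelfAdjoint) A hA.isUnit hA.1, hA.1.trace_cfc]
  simp

lemma IsHermitian.one_le_eigenvalues {A : Matrix n n 𝕜} (hA : A.IsHermitian) (h : 1 ≤ A)
    (i : n) : 1 ≤ hA.eigenvalues i :=
  (algebraMap_le_iff_le_spectrum (r := (1 : ℝ)) (a := A) hA).mp (by simpa using h) _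
    (hA.eigenvalues_mem_spectrum_real i)

lemma trace_inv_le_card_of_one_le {A : Matrix n n ℝ} (h : 1 ≤ A) :
    A⁻¹.trace ≤ Fintype.card n := by
  have hA := posDef_of_one_le h
  rw [hA.trace_inv, ← Finset.card_univ, Finset.card_eq_sum_ones, Nat.cast_sum]
  gcongr with i
  simpa using inv_le_one_of_one_le₀ (hA.1.one_le_eigenvalues h i)

lemma PosDef.sq_card_le_trace_mul_trace_inv {A : Matrix n n ℝ} (hA : A.PosDef) :
    (Fintype.card n : ℝ) ^ 2 ≤ A.trace * A⁻¹.trace := by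
  rw [hA.trace_inv, hA.1.trace_eq_sum_eigenvalues, ← Finset.card_univ, Finset.card_eq_sum_ones,
    Nat.cast_sum]
  refine Finset.sum_sq_le_sum_mul_sum_of_sq_le_mul _ (fun i _ ↦ (hA.eigenvalues_pos i).le)
    (fun i _ ↦ (inv_pos.mpr (hA.eigenvalues_pos i)).le) fun i _ ↦ ?_
  simp [mul_inv_cancel₀ (hA.eigenvalues_pos i).ne']

lemma trace_inv_div_card_bounds_of_one_le [Nonempty n] {A : Matrix n n ℝ} (h : 1 ≤ A) {μ : ℝ}
    (htr : A.trace ≤ Fintype.card n * (1 + μ)) :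
    1 / (1 + μ) ≤ A⁻¹.trace / Fintype.card n ∧ A⁻¹.trace / Fintype.card n ≤ 1 := by
  have hA := posDef_of_one_le h
  have hm : (0 : ℝ) < Fintype.card n := by exact_mod_cast Fintype.card_pos
  have hκ := trace_inv_le_card_of_one_le h
  have hκ_nonneg := hA.inv.posSemidef.trace_nonneg
  have hsq := hA.sq_card_le_trace_mul_trace_inv
  have hμ : 0 < 1 + μ := by
    by_contra! hμ
    nlinarith [mul_le_mul_of_nonneg_right htr hκ_nonneg, mul_nonpos_of_nonneg_of_nonpos
      (mul_nonneg hm.le hκ_nonneg) hμ]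
  refine ⟨?_, (div_le_one hm).mpr hκ⟩
  rw [div_le_div_iff₀ hμ hm]
  nlinarith [mul_le_mul_of_nonneg_right htr hκ_nonneg]

lemma trace_one_add_transpose_mul_self_le {m k : Type*} [Fintype m] [Fintype k] [DecidableEq k]
    (Q : Matrix m k ℝ) (hQ : ∀ i j, |Q i j| ≤ 1) :
    (1 + Qᵀ * Q).trace ≤ Fintype.card k + ∑ i, (#{j | Q i j ≠ 0} : ℝ) := by
  rw [trace_add, trace_one, trace_transpose_mul_self]
  gcongr with i
  exact Finset.sum_sq_le_card_filter_ne_zero _ (hQ i)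

end Matrix

lemma single_sub_single_dotProduct {V R : Type*} [Fintype V] [DecidableEq V] [Ring R]
    (a b : V) (x : V → R) : (Pi.single a 1 - Pi.single b 1) ⬝ᵥ x = x a - x b := by
  simp [sub_dotProduct]

lemma single_sub_single_mem_span_of_eqvGen {ι V R : Type*} [DecidableEq V] [Ring R]
    (r : ι → V → R) (s : Set ι) {a b : V}
    (h : Relation.EqvGen (fun u v ↦ ∃ j ∈ s, r j = Pi.single u 1 - Pi.single v 1) a b) :
    Pi.single a 1 - Pi.single b 1 ∈ Submodule.span R (r '' s) := by
  induction h with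
  | rel u v huv =>
    obtain ⟨j, hj, hr⟩ := huv
    exact hr ▸ Submodule.subset_span ⟨j, hj, rfl⟩
  | refl => simp
  | symm u v _ ih => simpa using Submodule.neg_mem _ ih
  | trans u v w _ _ ih₁ ih₂ => simpa using Submodule.add_mem _ ih₁ ih₂

namespace IsEdgeRow

variable {n : ℕ} {r : Fin n → ℝ}

lemma exists_eq_single_sub_single (h : IsEdgeRow r) :
    ∃ a b, r = Pi.single a 1 - Pi.single b 1 := by
  obtain ⟨a, b, hab, ha, hb, h0⟩ := h
  refine ⟨a, b, funext fun j ↦ ?_⟩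
  by_cases hja : j = a
  · subst hja; simp [hab, ha]
  by_cases hjb : j = b
  · subst hjb; simp [Ne.symm hab, hb]
  · simp [hja, hjb, h0 j hja hjb]

lemma abs_dotProduct_le_one (h : IsEdgeRow r) {x : Fin n → ℝ}
    (hx : ∀ v, x v = 0 ∨ x v = 1) : |r ⬝ᵥ x| ≤ 1 := by
  obtain ⟨a, b, rfl⟩ := h.exists_eq_single_sub_single
  rw [single_sub_single_dotProduct]
  rcases hx a with ha | ha <;> rcases hx b with hb | hb <;> norm_num [ha, hb]

end IsEdgeRow

section EdgeRows

variable {n : ℕ} {ι : Type*} [DecidableEq ι]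

lemma exists_zero_one_mulVec_eq_single (Ht : Matrix ι (Fin n) ℝ)
    (hHt : ∀ i, IsEdgeRow (Ht i)) (hli : LinearIndependent ℝ Ht) (j₀ : ι) :
    ∃ x : Fin n → ℝ, (∀ v, x v = 0 ∨ x v = 1) ∧ Ht *ᵥ x = Pi.single j₀ 1 := by
  classical
  -- `x` is the indicator of the component of the tail `a₀` of edge `j₀` once `j₀` is removed;
  -- its head `b₀` lies in another component, or else row `j₀` would be spanned by the others.
  let Joined := Relation.EqvGen fun u v ↦
    ∃ j ∈ ({j₀}ᶜ : Set ι), Ht j = Pi.single u 1 - Pi.single v 1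
  obtain ⟨a₀, b₀, hj₀⟩ := (hHt j₀).exists_eq_single_sub_single
  have hb₀ : ¬ Joined a₀ b₀ := fun h ↦ hli.notMem_span_image (by simp)
    (hj₀ ▸ single_sub_single_mem_span_of_eqvGen Ht _ h)
  let x : Fin n → ℝ := fun v ↦ if Joined a₀ v then 1 else 0
  refine ⟨x, fun v ↦ by by_cases h : Joined a₀ v <;> simp [x, h], funext fun j ↦ ?_⟩
  change Ht j ⬝ᵥ x = _
  by_cases hjj₀ : j = j₀
  · subst hjj₀
    have ha₀ : Joined a₀ a₀ := .refl _
    rw [hj₀, single_sub_single_dotProduct]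
    simp [x, ha₀, hb₀]
  · obtain ⟨a, b, hj⟩ := (hHt j).exists_eq_single_sub_single
    have hab : Joined a b := .rel _ _ ⟨j, hjj₀, hj⟩
    have : Joined a₀ a ↔ Joined a₀ b :=
      ⟨fun h ↦ h.trans _ _ _ hab, fun h ↦ h.trans _ _ _ hab.symm⟩
    rw [hj, single_sub_single_dotProduct]
    simp [x, this, hjj₀]

lemma abs_le_one_of_isEdgeRow_mul {κ : Type*} [Fintype ι] {Ht : Matrix ι (Fin n) ℝ}
    {Q : Matrix κ ι ℝ} (hHt : ∀ i, IsEdgeRow (Ht i)) (hli : LinearIndependent ℝ Ht)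
    (hQHt : ∀ k, IsEdgeRow ((Q * Ht) k)) (k : κ) (j : ι) : |Q k j| ≤ 1 := by
  obtain ⟨x, hx01, hx⟩ := exists_zero_one_mulVec_eq_single Ht hHt hli j
  have : (Q * Ht) k ⬝ᵥ x = Q k j := by
    change ((Q * Ht) *ᵥ x) k = _
    rw [← mulVec_mulVec, hx, mulVec_single_one]
    rfl
  exact this ▸ (hQHt k).abs_dotProduct_le_one hx01

end EdgeRows

theorem kappa_bounds_general {n c : ℕ} (hn : 2 ≤ n)
    (Ht : Matrix (Fin (n - 1)) (Fin n) ℝ)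
    (B : Matrix (Fin c) (Fin n) ℝ)
    (Q : Matrix (Fin c) (Fin (n - 1)) ℝ)
    (hHtRows : ∀ i, IsEdgeRow (Ht i))
    (hBRows : ∀ k, IsEdgeRow (B k))
    (hrank : Ht.rank = n - 1)
    (hQ : B = (-Q) * Ht) :
    letI cycLen : Fin c → ℕ :=
      fun k => (Finset.univ.filter fun j => Q k j ≠ 0).card + 1
    letI μ : ℝ := ((n : ℝ) - 1)⁻¹ * ∑ k, ((cycLen k : ℝ) - 1)
    letI κ : ℝ := (((1 : Matrix (Fin (n-1)) (Fin (n-1)) ℝ) + Qᵀ * Q)⁻¹).trace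
    1 / (1 + μ) ≤ κ / ((n : ℝ) - 1) ∧ κ / ((n : ℝ) - 1) ≤ 1 := by
  beta_reduce
  have hm : (n : ℝ) - 1 = Fintype.card (Fin (n - 1)) := by
    simp [Nat.cast_sub (by omega : 1 ≤ n)]
  have : Nonempty (Fin (n - 1)) := ⟨⟨0, by omega⟩⟩
  have hQ1 (k j) : |Q k j| ≤ 1 := by
    simpa using abs_le_one_of_isEdgeRow_mul (Q := -Q) hHtRows
      (linearIndependent_row_of_rank_eq_card (by simpa using hrank)) (fun k ↦ hQ ▸ hBRows k) k j
  rw [hm]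
  refine trace_inv_div_card_bounds_of_one_le
    (le_iff.mpr (by simpa using posSemidef_conjTranspose_mul_self Q))
    ((trace_one_add_transpose_mul_self_le Q hQ1).trans_eq ?_)
  push_cast
  simp only [add_sub_cancel_right]
  field_simp

/-- For a connected graph `G` on `n` vertices of corank `c > 0` with spanning
tree `G̃`, fundamental cycles `O₁,…,O_c` and cycle incidence matrix `Q`, setting
`κ(G,G̃) = Tr((I_{n-1}+QᵀQ)⁻¹)` and `μ = (n-1)⁻¹ Σ_k (|O_k|-1)`, one has
`1/(1+μ) ≤ κ(G,G̃)/(n-1) ≤ 1`. -/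
theorem kappa_bounds {n c : ℕ} (hn : 2 ≤ n) (hc : 0 < c)
    (Ht : Matrix (Fin (n - 1)) (Fin n) ℝ)
    (B : Matrix (Fin c) (Fin n) ℝ)
    (Q : Matrix (Fin c) (Fin (n - 1)) ℝ)
    (hHtRows : ∀ i, IsEdgeRow (Ht i))
    (hBRows : ∀ k, IsEdgeRow (B k))
    (hrank : Ht.rank = n - 1)
    (hQ : B = (-Q) * Ht) :
    letI cycLen : Fin c → ℕ :=
      fun k => (Finset.univ.filter fun j => Q k j ≠ 0).card + 1
    letI μ : ℝ := ((n : ℝ) - 1)⁻¹ * ∑ k, ((cycLen k : ℝ) - 1)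
    letI κ : ℝ := (((1 : Matrix (Fin (n-1)) (Fin (n-1)) ℝ) + Qᵀ * Q)⁻¹).trace
    1 / (1 + μ) ≤ κ / ((n : ℝ) - 1) ∧ κ / ((n : ℝ) - 1) ≤ 1 :=
  kappa_bounds_general hn Ht B Q hHtRows hBRows hrank hQ
end

section
/- Let G be a connected graph on n vertices with spanning tree G̃ whose fundamental cycles O₁,...,O_c are pairwise edge-disjoint, and let Q be the cycle incidence matrix. Then κ(G,G̃) = Tr((I_{n-1}+QᵀQ)⁻¹) = (n-1) - c + Σ_{k=1}^c |O_k|⁻¹; equivalently κ(G,G̃)/(n-1) = 1 - (c/(n-1))(1 - c⁻¹Σ_{k=1}^c |O_k|⁻¹). -/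
/-!
The rows of `Ht` are the edges of a spanning tree, so `Ht` has full row rank and for every
tree edge `i` some `u` solves `Ht u = eᵢ`. Thresholding `u` at the value on the positive end
of `i` gives a `0/1` solution `w` (the indicator of one side of the cut of `i`), and then
`Q k i = -(B k ⬝ w)` is a difference of two values of `w`, hence in `{0, 1, -1}`. With
edge-disjoint cycles this makes `Q Qᵀ` diagonal with entries `|Oₖ| - 1`, and the push-through
identity `(1 + QᵀQ)⁻¹ = 1 - Qᵀ (1 + Q Qᵀ)⁻¹ Q` turns the trace into
`(n - 1) - c + tr (1 + Q Qᵀ)⁻¹`.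
-/

open Matrix

namespace Matrix

section Field

variable {K m n : Type*} [Field K] [Fintype m] [Fintype n]

theorem trace_inv_one_add_mul_comm [DecidableEq m] [DecidableEq n]
    (A : Matrix m n K) (B : Matrix n m K) (h : IsUnit (1 + A * B)) :
    trace (1 + B * A)⁻¹ = (Fintype.card n : K) - Fintype.card m + trace (1 + A * B)⁻¹ := by
  have hpush : (1 + B * A)⁻¹ = 1 - B * (1 + A * B)⁻¹ * A := by
    simpa using add_mul_mul_inv_eq_sub (1 : Matrix n n K) B 1 A isUnit_one isUnit_one
      (by simpa using h)
  have hcancel : (1 + A * B)⁻¹ * (A * B) = 1 - (1 + A * B)⁻¹ := by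
    rw [eq_sub_iff_add_eq, ← mul_add_one, add_comm (A * B),
      nonsing_inv_mul _ ((isUnit_iff_isUnit_det _).mp h)]
  rw [hpush, trace_sub, trace_one, Matrix.mul_assoc B, trace_mul_comm, Matrix.mul_assoc, hcancel,
    trace_sub, trace_one]
  ring

theorem isUnit_one_add_diagonal [DecidableEq m] {d : m → K} (hd : ∀ i, 1 + d i ≠ 0) :
    IsUnit (1 + diagonal d) := by
  rw [← diagonal_one, diagonal_add, isUnit_diagonal, Pi.isUnit_iff]
  exact fun i => (hd i).isUnit

theorem trace_inv_one_add_diagonal [DecidableEq m] {d : m → K} (hd : ∀ i, 1 + d i ≠ 0) :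
    trace (1 + diagonal d)⁻¹ = ∑ i, (1 + d i)⁻¹ := by
  have hinv : diagonal (fun i => (1 + d i)⁻¹) * diagonal (fun i => 1 + d i) = 1 := by
    rw [diagonal_mul_diagonal, ← diagonal_one]
    exact congrArg diagonal (funext fun i => inv_mul_cancel₀ (hd i))
  rw [← diagonal_one, diagonal_add, inv_eq_left_inv hinv, trace_diagonal]

theorem mulVec_surjective_of_rank_eq_card {A : Matrix m n K} (hA : A.rank = Fintype.card m) :
    Function.Surjective A.mulVec := by
  have : LinearMap.range A.mulVecLin = ⊤ :=
    Submodule.eq_top_of_finrank_eq (by rw [Module.finrank_fintype_fun_eq_card]; exact hA)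
  exact LinearMap.range_eq_top.mp this

end Field

theorem mul_transpose_eq_diagonal_of_disjoint {R m n : Type*} [Ring R] [DecidableEq R]
    [DecidableEq m] [Fintype n] {Q : Matrix m n R}
    (hQ : ∀ k j, Q k j = 0 ∨ Q k j = 1 ∨ Q k j = -1)
    (hdisj : ∀ k l : m, k ≠ l → ∀ j, ¬(Q k j ≠ 0 ∧ Q l j ≠ 0)) :
    Q * Qᵀ = diagonal fun k => ((Finset.univ.filter fun j => Q k j ≠ 0).card : R) := by
  ext k l
  rw [mul_apply, diagonal_apply]
  split_ifs with hkl
  · subst hkl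
    rw [Finset.natCast_card_filter]
    refine Finset.sum_congr rfl fun j _ => ?_
    rcases hQ k j with h | h | h <;> simp [h]
  · refine Finset.sum_eq_zero fun j _ => ?_
    by_cases hk : Q k j = 0
    · simp [hk]
    · simp [not_not.mp fun hl => hdisj k l hkl j ⟨hk, hl⟩]

end Matrix

namespace IsEdgeRow

variable {N : ℕ} {r : Fin N → ℝ}

lemma eq_single_sub_single (hr : IsEdgeRow r) :
    ∃ a b : Fin N, r = Pi.single a 1 - Pi.single b 1 := by
  obtain ⟨a, b, hab, ha, hb, h0⟩ := hr
  refine ⟨a, b, funext fun j => ?_⟩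
  by_cases hja : j = a
  · subst hja; simp [ha, hab]
  by_cases hjb : j = b
  · subst hjb; simp [hb, hja]
  · simp [h0 j hja hjb, hja, hjb]

lemma dotProduct_mem_of_zero_or_one (hr : IsEdgeRow r) {w : Fin N → ℝ}
    (hw : ∀ v, w v = 0 ∨ w v = 1) : r ⬝ᵥ w = 0 ∨ r ⬝ᵥ w = 1 ∨ r ⬝ᵥ w = -1 := by
  obtain ⟨a, b, rfl⟩ := hr.eq_single_sub_single
  simp only [sub_dotProduct, single_dotProduct, one_mul]
  rcases hw a with ha | ha <;> rcases hw b with hb | hb <;> norm_num [ha, hb]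

end IsEdgeRow

section EdgeRows

variable {m p : Type*} [Fintype m] {N : ℕ}

lemma exists_zero_one_mulVec_eq_single_s18 [DecidableEq m] {A : Matrix m (Fin N) ℝ}
    (hrows : ∀ i, IsEdgeRow (A i)) (hrank : A.rank = Fintype.card m) (i : m) :
    ∃ w : Fin N → ℝ, (∀ v, w v = 0 ∨ w v = 1) ∧ A *ᵥ w = Pi.single i 1 := by
  choose a b hab using fun j => (hrows j).eq_single_sub_single
  have hmulVec : ∀ u j, (A *ᵥ u) j = u (a j) - u (b j) := fun u j => by
    change A j ⬝ᵥ u = _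
    simp [hab j, sub_dotProduct, single_dotProduct]
  obtain ⟨u, hu⟩ := mulVec_surjective_of_rank_eq_card hrank (Pi.single i 1)
  refine ⟨fun v => if u (a i) ≤ u v then 1 else 0,
    fun v => by dsimp only; split_ifs <;> simp, ?_⟩
  funext j
  have huj := congrFun hu j
  rw [hmulVec] at huj ⊢
  by_cases hji : j = i
  · subst hji
    simp only [Pi.single_eq_same] at huj ⊢
    simp [show ¬ u (a j) ≤ u (b j) by linarith]
  · simp only [Pi.single_eq_of_ne hji] at huj ⊢
    simp [sub_eq_zero.mp huj]

lemma entry_eq_zero_or_one_or_neg_one_of_eq_mul [DecidableEq m] {Ht : Matrix m (Fin N) ℝ}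
    {B : Matrix p (Fin N) ℝ} {Q : Matrix p m ℝ} (hHt : ∀ i, IsEdgeRow (Ht i))
    (hB : ∀ k, IsEdgeRow (B k)) (hrank : Ht.rank = Fintype.card m) (hQ : B = Q * Ht)
    (k : p) (i : m) :
    Q k i = 0 ∨ Q k i = 1 ∨ Q k i = -1 := by
  obtain ⟨w, hw01, hw⟩ := exists_zero_one_mulVec_eq_single_s18 hHt hrank i
  have hQki : Q k i = B k ⬝ᵥ w :=
    calc Q k i = (Q *ᵥ Pi.single i 1) k := by simp [mulVec_single]
      _ = B k ⬝ᵥ w := by rw [← hw, mulVec_mulVec, ← hQ]; rfl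
  rw [hQki]
  exact (hB k).dotProduct_mem_of_zero_or_one hw01

end EdgeRows

theorem kappa_disjoint_cycles_general {n c : ℕ} (hn : 2 ≤ n)
    (Ht : Matrix (Fin (n - 1)) (Fin n) ℝ)
    (B : Matrix (Fin c) (Fin n) ℝ)
    (Q : Matrix (Fin c) (Fin (n - 1)) ℝ)
    (hHtRows : ∀ i, IsEdgeRow (Ht i))
    (hBRows : ∀ k, IsEdgeRow (B k))
    (hrank : Ht.rank = n - 1)
    (hQ : B = (-Q) * Ht)
    (hdisj : ∀ k l : Fin c, k ≠ l → ∀ j, ¬(Q k j ≠ 0 ∧ Q l j ≠ 0)) :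
    letI cycLen : Fin c → ℕ :=
      fun k => (Finset.univ.filter fun j => Q k j ≠ 0).card + 1
    letI κ : ℝ := (((1 : Matrix (Fin (n-1)) (Fin (n-1)) ℝ) + Qᵀ * Q)⁻¹).trace
    κ = ((n : ℝ) - 1) - c + ∑ k, ((cycLen k : ℝ))⁻¹ ∧
    κ / ((n : ℝ) - 1) =
      1 - ((c : ℝ) / ((n : ℝ) - 1)) * (1 - (c : ℝ)⁻¹ * ∑ k, ((cycLen k : ℝ))⁻¹) := by
  beta_reduce
  have hQ01 : ∀ k j, Q k j = 0 ∨ Q k j = 1 ∨ Q k j = -1 := fun k j => by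
    have := entry_eq_zero_or_one_or_neg_one_of_eq_mul hHtRows hBRows
      (by rw [hrank, Fintype.card_fin]) hQ k j
    rw [show (-Q) k j = -Q k j from rfl, neg_eq_zero, neg_eq_iff_eq_neg, neg_eq_iff_eq_neg,
      neg_neg] at this
    tauto
  have hQQt := mul_transpose_eq_diagonal_of_disjoint hQ01 hdisj
  have hpos : ∀ k, (1 : ℝ) + (Finset.univ.filter fun j => Q k j ≠ 0).card ≠ 0 :=
    fun k => by positivity
  have hκ : trace (1 + Qᵀ * Q)⁻¹ = ((n : ℝ) - 1) - c +
      ∑ k, (((Finset.univ.filter fun j => Q k j ≠ 0).card + 1 : ℕ) : ℝ)⁻¹ := by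
    rw [trace_inv_one_add_mul_comm Q Qᵀ (hQQt ▸ isUnit_one_add_diagonal hpos), hQQt,
      trace_inv_one_add_diagonal hpos]
    rw [Fintype.card_fin, Fintype.card_fin, Nat.cast_sub (by omega : 1 ≤ n), Nat.cast_one]
    exact congrArg _ (Finset.sum_congr rfl fun k _ => by rw [Nat.cast_succ, add_comm])
  have hn1 : (n : ℝ) - 1 ≠ 0 := by
    have : (2 : ℝ) ≤ n := by exact_mod_cast hn
    linarith
  refine ⟨hκ, ?_⟩
  rw [hκ]
  rcases Nat.eq_zero_or_pos c with rfl | _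
  · simp [hn1]
  · field_simp
    ring

/-- For a connected graph `G` on `n` vertices with spanning tree `G̃` whose
fundamental cycles `O₁,…,O_c` are pairwise edge-disjoint, with cycle incidence
matrix `Q`, one has
`κ(G,G̃) = Tr((I_{n-1}+QᵀQ)⁻¹) = (n-1) - c + Σ_k |O_k|⁻¹`, equivalently
`κ(G,G̃)/(n-1) = 1 - (c/(n-1))(1 - c⁻¹ Σ_k |O_k|⁻¹)`. -/
theorem kappa_disjoint_cycles {n c : ℕ} (hn : 2 ≤ n) (hc : 0 < c)
    (Ht : Matrix (Fin (n - 1)) (Fin n) ℝ)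
    (B : Matrix (Fin c) (Fin n) ℝ)
    (Q : Matrix (Fin c) (Fin (n - 1)) ℝ)
    (hHtRows : ∀ i, IsEdgeRow (Ht i))
    (hBRows : ∀ k, IsEdgeRow (B k))
    (hrank : Ht.rank = n - 1)
    (hQ : B = (-Q) * Ht)
    (hdisj : ∀ k l : Fin c, k ≠ l → ∀ j, ¬(Q k j ≠ 0 ∧ Q l j ≠ 0)) :
    letI cycLen : Fin c → ℕ :=
      fun k => (Finset.univ.filter fun j => Q k j ≠ 0).card + 1
    letI κ : ℝ := (((1 : Matrix (Fin (n-1)) (Fin (n-1)) ℝ) + Qᵀ * Q)⁻¹).trace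
    κ = ((n : ℝ) - 1) - c + ∑ k, ((cycLen k : ℝ))⁻¹ ∧
    κ / ((n : ℝ) - 1) =
      1 - ((c : ℝ) / ((n : ℝ) - 1)) * (1 - (c : ℝ)⁻¹ * ∑ k, ((cycLen k : ℝ))⁻¹) :=
  kappa_disjoint_cycles_general hn Ht B Q hHtRows hBRows hrank hQ hdisj
end
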